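/- Let G be a group with finite generating set and word metric, let k ≥ 0, and let (φ_q)_{q=0,…,m} be a chain endomorphism of ℤG-complexes on (C_q^k(G))_{q=0,…,m} extending the identity on ℤ. Then there exists l ≥ k and ℤG-linear maps λ_q : C_q^k(G) → C_{q+1}^l(G) for q = 0,…,m (together with λ_{−1} := 0) such that φ_q − id = ∂_{q+1}∘λ_q + λ_{q−1}∘∂_q for every q = 0,…,m; that is, (λ_q) is a chain homotopy joining (φ_q) to the identity. -/

import Mathlib

open Finsupp

variable {G : Type*} [Group G]

/-- Word length with respect to a generating set `X`. -/
noncomputable def wordLength (X : Finset G) (g : G) : ℕ :=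
  sInf {n : ℕ | ∃ w : List G, w.length = n ∧ (∀ x ∈ w, x ∈ X ∨ x⁻¹ ∈ X) ∧ w.prod = g}

/-- The left-invariant word metric `d(g,h) = l(g⁻¹h)`. -/
noncomputable def wordDist (X : Finset G) (g h : G) : ℕ :=
  wordLength X (g⁻¹ * h)

/-- `c` is a chain in `C_q^k(S)`: its support consists of `(q+1)`-tuples of elements of `S`
that are pairwise at distance at most `k`. -/
def VRChain (X : Finset G) (S : Set G) (q k : ℕ) (c : (Fin (q + 1) → G) →₀ ℤ) : Prop :=
  ∀ σ ∈ c.support, (∀ i, σ i ∈ S) ∧ ∀ i j, wordDist X (σ i) (σ j) ≤ k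

/-- The simplicial boundary map `∂_{q+1} : ℤ[G^{q+2}] → ℤ[G^{q+1}]`. -/
noncomputable def bnd (q : ℕ) :
    ((Fin (q + 2) → G) →₀ ℤ) →ₗ[ℤ] ((Fin (q + 1) → G) →₀ ℤ) :=
  Finsupp.lift _ ℤ _
    (fun σ => ∑ i : Fin (q + 2), ((-1 : ℤ) ^ (i : ℕ)) • Finsupp.single (σ ∘ i.succAbove) (1 : ℤ))

/-- The augmentation `ε : ℤ[G] → ℤ` sending every vertex to `1`. -/
noncomputable def aug : ((Fin 1 → G) →₀ ℤ) →ₗ[ℤ] ℤ :=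
  Finsupp.lift ℤ ℤ (Fin 1 → G) (fun _ => (1 : ℤ))

/-- Reduced `q`-cycles at scale `k` on `S` bound at scale `l` on `S`. -/
def BoundsAt (X : Finset G) (S : Set G) : ℕ → ℕ → ℕ → Prop
  | 0, k, l => ∀ z : (Fin 1 → G) →₀ ℤ, VRChain X S 0 k z → aug z = 0 →
      ∃ c : (Fin 2 → G) →₀ ℤ, VRChain X S 1 l c ∧ bnd 0 c = z
  | (q + 1), k, l => ∀ z : (Fin (q + 2) → G) →₀ ℤ, VRChain X S (q + 1) k z → bnd q z = 0 →
      ∃ c : (Fin (q + 3) → G) →₀ ℤ, VRChain X S (q + 2) l c ∧ bnd (q + 1) c = z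

/-- `S ⊆ G` is of type `FP_m`. -/
def TypeFP (X : Finset G) (S : Set G) (m : ℕ) : Prop :=
  ∀ q < m, ∀ k : ℕ, ∃ l ≥ k, BoundsAt X S q k l

/-- A character on `G` is a homomorphism to the additive reals. -/
def IsCharacter (χ : G → ℝ) : Prop :=
  ∀ g h : G, χ (g * h) = χ g + χ h

/-- Simultaneous left translation on chains, making `ℤ[G^{q+1}]` a `ℤG`-module. -/
noncomputable def lTranslate (g : G) (q : ℕ) :
    ((Fin (q + 1) → G) →₀ ℤ) →ₗ[ℤ] ((Fin (q + 1) → G) →₀ ℤ) :=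
  Finsupp.lmapDomain ℤ ℤ (fun σ i => g * σ i)

/-- A chain endomorphism of `ℤG`-complexes on `(C_q^k(G))_{q=0,…,m}` extending the identity
on `ℤ`: each `φ q` maps scale-`k` chains to scale-`k` chains, is `G`-equivariant,
satisfies `ε ∘ φ₀ = ε` and commutes with the boundary maps. -/
def IsChainEndo (X : Finset G) (k m : ℕ)
    (φ : ∀ q : ℕ, ((Fin (q + 1) → G) →₀ ℤ) →ₗ[ℤ] ((Fin (q + 1) → G) →₀ ℤ)) : Prop :=
  (∀ q ≤ m, ∀ c, VRChain X Set.univ q k c → VRChain X Set.univ q k (φ q c)) ∧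
  (∀ q ≤ m, ∀ (g : G) (c), VRChain X Set.univ q k c →
    φ q (lTranslate g q c) = lTranslate g q (φ q c)) ∧
  (∀ c : (Fin 1 → G) →₀ ℤ, VRChain X Set.univ 0 k c → aug (φ 0 c) = aug c) ∧
  (∀ q : ℕ, q + 1 ≤ m → ∀ c : (Fin (q + 2) → G) →₀ ℤ, VRChain X Set.univ (q + 1) k c →
    bnd q (φ (q + 1) c) = φ q (bnd q c))

/-- The valuation of a simplex: `v(σ) = min_i χ(g_i)` (with values in `EReal`). -/
noncomputable def vsimp (χ : G → ℝ) {q : ℕ} (σ : Fin (q + 1) → G) : EReal :=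
  ⨅ i, (χ (σ i) : EReal)

/-- The valuation of a chain: the minimum of the valuations of the simplices in its support
(`⊤` for the zero chain). -/
noncomputable def vchain (χ : G → ℝ) {q : ℕ} (c : (Fin (q + 1) → G) →₀ ℤ) : EReal :=
  ⨅ σ ∈ c.support, vsimp χ σ

/-!
Take `λ_q σ` to be the cone from the first vertex `σ₀` over `(φ_q - id - λ_{q-1} ∂_q) σ`. By
induction on `q` this chain is a cycle, so the cone identity `∂ ∘ cone_v = id - cone_v ∘ ∂`
yields `φ_q - id = ∂ λ_q + λ_{q-1} ∂`; and because the cone vertex is a vertex of `σ` itself,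
`λ` is `G`-equivariant. An equivariant map is determined by its values on the simplices with
`σ₀ = 1`, and since balls of the word metric are finite there are only finitely many such
simplices of scale `k`; their images have bounded scale, which gives a uniform `l`.
-/

section WordMetric

open scoped Pointwise

variable (X : Finset G)

lemma wordDist_mul_left (g a b : G) : wordDist X (g * a) (g * b) = wordDist X a b := by
  simp [wordDist, mul_assoc]

variable {X}

lemma exists_word_of_length_eq_wordLength (hX : Subgroup.closure (X : Set G) = ⊤) (g : G) :
    ∃ w : List G, w.length = wordLength X g ∧ (∀ x ∈ w, x ∈ X ∨ x⁻¹ ∈ X) ∧ w.prod = g := by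
  have hg : g ∈ Submonoid.closure ((X : Set G) ∪ (X : Set G)⁻¹) := by
    rw [← Subgroup.closure_toSubmonoid, hX]; trivial
  obtain ⟨w, hwX, rfl⟩ := Submonoid.exists_list_of_mem_closure hg
  exact Nat.sInf_mem (s := {n | ∃ v : List G, v.length = n ∧ (∀ x ∈ v, x ∈ X ∨ x⁻¹ ∈ X) ∧
    v.prod = w.prod}) ⟨w.length, w, rfl, fun x hx => by simpa using hwX x hx, rfl⟩

lemma list_prod_mem_pow {Y : Set G} {w : List G} (hw : ∀ x ∈ w, x ∈ Y) :
    w.prod ∈ Y ^ w.length := by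
  induction w with
  | nil => simp
  | cons x w ih =>
    rw [List.prod_cons, List.length_cons, pow_succ']
    exact Set.mul_mem_mul (hw x List.mem_cons_self)
      (ih fun y hy => hw y (List.mem_cons_of_mem x hy))

lemma finite_setOf_wordLength_le (hX : Subgroup.closure (X : Set G) = ⊤) (K : ℕ) :
    {g : G | wordLength X g ≤ K}.Finite := by
  classical
  set Y : Finset G := insert 1 (X ∪ X⁻¹)
  refine (Y ^ K).finite_toSet.subset fun g hg => ?_
  obtain ⟨w, hlen, hwX, rfl⟩ := exists_word_of_length_eq_wordLength hX g
  rw [Finset.coe_pow]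
  refine Set.pow_subset_pow_right (by simp [Y]) (hlen ▸ hg) (list_prod_mem_pow fun x hx => ?_)
  rcases hwX x hx with h | h <;> simp [Y, h]

end WordMetric

namespace Finsupp

variable {α R M : Type*} [Semiring R] [AddCommMonoid M] [Module R M] {s : Set α}

lemma eqOn_supported_of_single {f g : (α →₀ R) →ₗ[R] M}
    (h : ∀ a ∈ s, f (single a 1) = g (single a 1)) : Set.EqOn f g (supported R R s) := by
  rw [supported_eq_span_single]
  exact LinearMap.eqOn_span' fun _ ⟨a, ha, hfa⟩ => hfa ▸ h a ha

lemma apply_mem_of_mem_supported {f : (α →₀ R) →ₗ[R] M} {N : Submodule R M}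
    (h : ∀ a ∈ s, f (single a 1) ∈ N) {c : α →₀ R} (hc : c ∈ supported R R s) : f c ∈ N := by
  suffices hle : supported R R s ≤ N.comap f from hle hc
  rw [supported_eq_span_single, Submodule.span_le]
  rintro _ ⟨a, ha, rfl⟩
  exact h a ha

end Finsupp

section RipsChains

variable (X : Finset G)

def ripsSimplices (q K : ℕ) : Set (Fin (q + 1) → G) :=
  {σ | ∀ i j, wordDist X (σ i) (σ j) ≤ K}

abbrev ripsChains (q K : ℕ) : Submodule ℤ ((Fin (q + 1) → G) →₀ ℤ) :=
  Finsupp.supported ℤ ℤ (ripsSimplices X q K)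

variable {X}

lemma vrChain_univ_iff {q K : ℕ} {c : (Fin (q + 1) → G) →₀ ℤ} :
    VRChain X Set.univ q K c ↔ c ∈ ripsChains X q K := by
  simp [VRChain, Finsupp.mem_supported, Set.subset_def, ripsSimplices]

lemma ripsChains_mono {q K K' : ℕ} (h : K ≤ K') : ripsChains X q K ≤ ripsChains X q K' :=
  Finsupp.supported_mono fun _ hσ i j => (hσ i j).trans h

lemma single_mem_ripsChains {q K : ℕ} {σ : Fin (q + 1) → G} (hσ : σ ∈ ripsSimplices X q K) :
    Finsupp.single σ 1 ∈ ripsChains X q K :=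
  Finsupp.single_mem_supported ℤ 1 hσ

end RipsChains

section Cone

variable {α : Type*}

noncomputable def coneAt (v : α) (q : ℕ) :
    ((Fin (q + 1) → α) →₀ ℤ) →ₗ[ℤ] ((Fin (q + 2) → α) →₀ ℤ) :=
  Finsupp.lmapDomain ℤ ℤ fun σ => Fin.cons v σ

lemma coneAt_single (v : α) (q : ℕ) (σ : Fin (q + 1) → α) (n : ℤ) :
    coneAt v q (Finsupp.single σ n) = Finsupp.single (Fin.cons v σ) n := by
  simp [coneAt]

lemma bnd_single (q : ℕ) (σ : Fin (q + 2) → α) :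
    bnd q (Finsupp.single σ 1) =
      ∑ i : Fin (q + 2), ((-1 : ℤ) ^ (i : ℕ)) • Finsupp.single (σ ∘ i.succAbove) 1 := by
  simp [bnd]

lemma aug_single (σ : Fin 1 → α) : aug (Finsupp.single σ 1) = 1 := by
  simp [aug]

lemma bnd_coneAt_zero (v : α) (c : (Fin 1 → α) →₀ ℤ) :
    bnd 0 (coneAt v 0 c) = c - aug c • Finsupp.single (fun _ => v) 1 := by
  suffices h : (bnd 0).comp (coneAt v 0) =
      LinearMap.id - aug.smulRight (Finsupp.single (fun _ => v) 1) from LinearMap.congr_fun h c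
  ext σ : 2
  have hv : (Fin.cons v σ : Fin 2 → α) ∘ Fin.succAbove 1 = fun _ => v := by
    funext i
    rw [Fin.fin_one_eq_zero i]
    rfl
  simp [coneAt_single, bnd_single, aug_single, Fin.sum_univ_two, hv, sub_eq_add_neg]

lemma bnd_coneAt (v : α) (q : ℕ) (c : (Fin (q + 2) → α) →₀ ℤ) :
    bnd (q + 1) (coneAt v (q + 1) c) = c - coneAt v q (bnd q c) := by
  suffices h : (bnd (q + 1)).comp (coneAt v (q + 1)) =
      LinearMap.id - (coneAt v q).comp (bnd q) from LinearMap.congr_fun h c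
  ext σ : 2
  simp only [LinearMap.comp_apply, Finsupp.lsingle_apply, LinearMap.sub_apply, LinearMap.id_apply,
    coneAt_single, bnd_single, map_sum, map_zsmul, Fin.sum_univ_succ (n := q + 2),
    Fin.succAbove_zero, Fin.cons_comp_succ, Fin.cons_comp_succ_succAbove, Fin.val_zero,
    Fin.val_succ, pow_zero, one_smul, pow_succ, mul_neg_one, neg_smul, Finset.sum_neg_distrib,
    ← sub_eq_add_neg]
  rfl

lemma aug_bnd (c : (Fin 2 → α) →₀ ℤ) : aug (bnd 0 c) = 0 := by
  suffices h : aug.comp (bnd 0) = 0 from LinearMap.congr_fun h c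
  ext σ
  simp [bnd_single, aug_single, Fin.sum_univ_succ]

lemma bnd_bnd (q : ℕ) (c : (Fin (q + 3) → α) →₀ ℤ) : bnd q (bnd (q + 1) c) = 0 := by
  suffices h : (bnd q).comp (bnd (q + 1)) = 0 from LinearMap.congr_fun h c
  ext σ : 2
  have hσ : Finsupp.single σ 1 = coneAt (σ 0) (q + 1) (Finsupp.single (Fin.tail σ) 1) := by
    rw [coneAt_single, Fin.cons_self_tail]
  simp only [LinearMap.comp_apply, Finsupp.lsingle_apply, LinearMap.zero_apply]
  rw [hσ, bnd_coneAt, map_sub]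
  cases q with
  | zero => rw [bnd_coneAt_zero, aug_bnd, zero_smul, sub_zero, sub_self]
  | succ p => rw [bnd_coneAt, bnd_bnd p, map_zero, sub_zero, sub_self]

end Cone

section Translation

lemma lTranslate_single (g : G) (q : ℕ) (σ : Fin (q + 1) → G) (n : ℤ) :
    lTranslate g q (Finsupp.single σ n) = Finsupp.single (fun i => g * σ i) n := by
  simp [lTranslate]

lemma bnd_lTranslate (g : G) (q : ℕ) (c : (Fin (q + 2) → G) →₀ ℤ) :
    bnd q (lTranslate g (q + 1) c) = lTranslate g q (bnd q c) := by
  suffices h : (bnd q).comp (lTranslate g (q + 1)) = (lTranslate g q).comp (bnd q) from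
    LinearMap.congr_fun h c
  ext σ : 2
  simp only [LinearMap.comp_apply, Finsupp.lsingle_apply, lTranslate_single, bnd_single,
    map_sum, map_zsmul]
  rfl

lemma coneAt_lTranslate (g v : G) (q : ℕ) (c : (Fin (q + 1) → G) →₀ ℤ) :
    coneAt (g * v) q (lTranslate g q c) = lTranslate g (q + 1) (coneAt v q c) := by
  suffices h : (coneAt (g * v) q).comp (lTranslate g q) = (lTranslate g (q + 1)).comp (coneAt v q)
    from LinearMap.congr_fun h c
  ext σ : 2
  simp only [LinearMap.comp_apply, Finsupp.lsingle_apply, lTranslate_single, coneAt_single]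
  congr 1
  funext i
  cases i using Fin.cases <;> rfl

variable {X : Finset G}

lemma lTranslate_mem_ripsChains (g : G) {q K : ℕ} {c : (Fin (q + 1) → G) →₀ ℤ}
    (hc : c ∈ ripsChains X q K) : lTranslate g q c ∈ ripsChains X q K := by
  refine Finsupp.supported_mono ?_ ((Finsupp.lmapDomain_supported ℤ ℤ _ _).le ⟨c, hc, rfl⟩)
  rintro _ ⟨σ, hσ, rfl⟩ i j
  simpa [wordDist_mul_left] using hσ i j

lemma bnd_mem_ripsChains {q K : ℕ} {c : (Fin (q + 2) → G) →₀ ℤ}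
    (hc : c ∈ ripsChains X (q + 1) K) : bnd q c ∈ ripsChains X q K := by
  refine Finsupp.apply_mem_of_mem_supported (fun σ hσ => ?_) hc
  rw [bnd_single]
  exact Submodule.sum_mem _ fun i _ =>
    Submodule.smul_mem _ _ (single_mem_ripsChains fun a b => hσ _ _)

end Translation

section Scale

variable {X : Finset G}

noncomputable def chainScale (X : Finset G) {q : ℕ} (c : (Fin (q + 1) → G) →₀ ℤ) : ℕ :=
  c.support.sup fun σ => Finset.univ.sup fun ij : Fin (q + 1) × Fin (q + 1) =>
    wordDist X (σ ij.1) (σ ij.2)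

lemma mem_ripsChains_chainScale {q : ℕ} (c : (Fin (q + 1) → G) →₀ ℤ) :
    c ∈ ripsChains X q (chainScale X c) := by
  intro σ hσ i j
  exact Finset.le_sup_of_le hσ (Finset.le_sup_of_le (Finset.mem_univ (i, j)) le_rfl)

lemma finite_ripsSimplices_sep_zero_eq_one (hX : Subgroup.closure (X : Set G) = ⊤) (q k : ℕ) :
    {σ ∈ ripsSimplices X q k | σ 0 = 1}.Finite := by
  refine (Set.Finite.pi fun _ => finite_setOf_wordLength_le hX k).subset ?_
  rintro σ ⟨hσ, h0⟩ i -
  simpa [wordDist, h0] using hσ 0 i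

lemma exists_mem_ripsChains_of_equivariant (hX : Subgroup.closure (X : Set G) = ⊤) {q q' k : ℕ}
    (f : ((Fin (q + 1) → G) →₀ ℤ) →ₗ[ℤ] ((Fin (q' + 1) → G) →₀ ℤ))
    (hf : ∀ g, ∀ c ∈ ripsChains X q k, f (lTranslate g q c) = lTranslate g q' (f c)) :
    ∃ l, ∀ c ∈ ripsChains X q k, f c ∈ ripsChains X q' l := by
  classical
  set R := (finite_ripsSimplices_sep_zero_eq_one hX q k).toFinset
  refine ⟨R.sup fun ρ => chainScale X (f (Finsupp.single ρ 1)),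
    fun c hc => Finsupp.apply_mem_of_mem_supported (fun σ hσ => ?_) hc⟩
  set τ : Fin (q + 1) → G := fun i => (σ 0)⁻¹ * σ i
  have hτ : τ ∈ ripsSimplices X q k := fun i j => by simpa [τ, wordDist_mul_left] using hσ i j
  have hστ : Finsupp.single σ 1 = lTranslate (σ 0) q (Finsupp.single τ 1) := by
    simp [lTranslate_single, τ]
  rw [hστ, hf _ _ (single_mem_ripsChains hτ)]
  refine lTranslate_mem_ripsChains _ (ripsChains_mono ?_ (mem_ripsChains_chainScale _))
  exact Finset.le_sup (f := fun ρ => chainScale X (f (Finsupp.single ρ 1))) (by simp [R, hτ, τ])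

end Scale

section ConeHomotopy

variable {α : Type*} (φ : ∀ q : ℕ, ((Fin (q + 1) → α) →₀ ℤ) →ₗ[ℤ] ((Fin (q + 1) → α) →₀ ℤ))

noncomputable def coneHomotopy : ∀ q : ℕ, ((Fin (q + 1) → α) →₀ ℤ) →ₗ[ℤ] ((Fin (q + 2) → α) →₀ ℤ)
  | 0 => Finsupp.lift _ ℤ _ fun σ =>
      coneAt (σ 0) 0 (φ 0 (Finsupp.single σ 1) - Finsupp.single σ 1)
  | q + 1 => Finsupp.lift _ ℤ _ fun σ => coneAt (σ 0) (q + 1)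
      (φ (q + 1) (Finsupp.single σ 1) - Finsupp.single σ 1 -
        coneHomotopy q (bnd q (Finsupp.single σ 1)))

lemma coneHomotopy_zero_single (σ : Fin 1 → α) :
    coneHomotopy φ 0 (Finsupp.single σ 1) =
      coneAt (σ 0) 0 (φ 0 (Finsupp.single σ 1) - Finsupp.single σ 1) := by
  simp [coneHomotopy]

lemma coneHomotopy_succ_single (q : ℕ) (σ : Fin (q + 2) → α) :
    coneHomotopy φ (q + 1) (Finsupp.single σ 1) = coneAt (σ 0) (q + 1)
      (φ (q + 1) (Finsupp.single σ 1) - Finsupp.single σ 1 -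
        coneHomotopy φ q (bnd q (Finsupp.single σ 1))) := by
  simp [coneHomotopy]

end ConeHomotopy

section ChainEndo

variable {X : Finset G} {k m : ℕ}
  {φ : ∀ q : ℕ, ((Fin (q + 1) → G) →₀ ℤ) →ₗ[ℤ] ((Fin (q + 1) → G) →₀ ℤ)}

lemma coneHomotopy_lTranslate (hφ : IsChainEndo X k m φ) {q : ℕ} (hq : q ≤ m) (g : G)
    {c : (Fin (q + 1) → G) →₀ ℤ} (hc : c ∈ ripsChains X q k) :
    coneHomotopy φ q (lTranslate g q c) = lTranslate g (q + 1) (coneHomotopy φ q c) := by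
  refine Finsupp.eqOn_supported_of_single (f := (coneHomotopy φ q).comp (lTranslate g q))
    (g := (lTranslate g (q + 1)).comp (coneHomotopy φ q)) (fun σ hσ => ?_) hc
  have hφg := hφ.2.1 q hq g _ (vrChain_univ_iff.mpr (single_mem_ripsChains hσ))
  simp only [LinearMap.comp_apply]
  cases q with
  | zero =>
    rw [lTranslate_single, coneHomotopy_zero_single, coneHomotopy_zero_single,
      ← lTranslate_single, hφg, ← map_sub, coneAt_lTranslate]
  | succ p =>
    rw [lTranslate_single, coneHomotopy_succ_single, coneHomotopy_succ_single,
      ← lTranslate_single, hφg, bnd_lTranslate,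
      coneHomotopy_lTranslate hφ (by omega) g (bnd_mem_ripsChains (single_mem_ripsChains hσ)),
      ← map_sub, ← map_sub, coneAt_lTranslate]

lemma bnd_coneHomotopy_zero (hφ : IsChainEndo X k m φ) {c : (Fin 1 → G) →₀ ℤ}
    (hc : c ∈ ripsChains X 0 k) : bnd 0 (coneHomotopy φ 0 c) = φ 0 c - c := by
  refine Finsupp.eqOn_supported_of_single (f := (bnd 0).comp (coneHomotopy φ 0))
    (g := φ 0 - LinearMap.id) (fun σ hσ => ?_) hc
  simp only [LinearMap.comp_apply, LinearMap.sub_apply, LinearMap.id_apply]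
  rw [coneHomotopy_zero_single, bnd_coneAt_zero, map_sub,
    hφ.2.2.1 _ (vrChain_univ_iff.mpr (single_mem_ripsChains hσ)), sub_self, zero_smul, sub_zero]

lemma bnd_coneHomotopy_succ (hφ : IsChainEndo X k m φ) {q : ℕ} (hq : q + 1 ≤ m)
    {c : (Fin (q + 2) → G) →₀ ℤ} (hc : c ∈ ripsChains X (q + 1) k) :
    bnd (q + 1) (coneHomotopy φ (q + 1) c) = φ (q + 1) c - c - coneHomotopy φ q (bnd q c) := by
  refine Finsupp.eqOn_supported_of_single (f := (bnd (q + 1)).comp (coneHomotopy φ (q + 1)))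
    (g := φ (q + 1) - LinearMap.id - (coneHomotopy φ q).comp (bnd q)) (fun σ hσ => ?_) hc
  have hbσ := bnd_mem_ripsChains (single_mem_ripsChains hσ)
  have hlower : bnd q (coneHomotopy φ q (bnd q (Finsupp.single σ 1))) =
      φ q (bnd q (Finsupp.single σ 1)) - bnd q (Finsupp.single σ 1) := by
    cases q with
    | zero => exact bnd_coneHomotopy_zero hφ hbσ
    | succ p => rw [bnd_coneHomotopy_succ hφ (by omega) hbσ, bnd_bnd, map_zero, sub_zero]
  have hcycle : bnd q (φ (q + 1) (Finsupp.single σ 1) - Finsupp.single σ 1 -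
      coneHomotopy φ q (bnd q (Finsupp.single σ 1))) = 0 := by
    rw [map_sub, map_sub, hφ.2.2.2 q hq _ (vrChain_univ_iff.mpr (single_mem_ripsChains hσ)),
      hlower, sub_self]
  simp only [LinearMap.comp_apply, LinearMap.sub_apply, LinearMap.id_apply]
  rw [coneHomotopy_succ_single, bnd_coneAt, hcycle, map_zero, sub_zero]

end ChainEndo

/-- Every chain endomorphism of `ℤG`-complexes on `(C_q^k(G))_{q≤m}` extending the identity
on `ℤ` is chain homotopic to the identity, via a `ℤG`-chain homotopy `λ_q : C_q^k → C_{q+1}^l`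
for some `l ≥ k`. -/
theorem stmt9 {G : Type*} [Group G] (X : Finset G)
    (hX : Subgroup.closure (X : Set G) = ⊤) (k m : ℕ)
    (φ : ∀ q : ℕ, ((Fin (q + 1) → G) →₀ ℤ) →ₗ[ℤ] ((Fin (q + 1) → G) →₀ ℤ))
    (hφ : IsChainEndo X k m φ) :
    ∃ l ≥ k, ∃ lam : ∀ q : ℕ, ((Fin (q + 1) → G) →₀ ℤ) →ₗ[ℤ] ((Fin (q + 2) → G) →₀ ℤ),
      (∀ q ≤ m, ∀ c, VRChain X Set.univ q k c → VRChain X Set.univ (q + 1) l (lam q c)) ∧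
      (∀ q ≤ m, ∀ (g : G) (c), VRChain X Set.univ q k c →
        lam q (lTranslate g q c) = lTranslate g (q + 1) (lam q c)) ∧
      (∀ c : (Fin 1 → G) →₀ ℤ, VRChain X Set.univ 0 k c →
        φ 0 c - c = bnd 0 (lam 0 c)) ∧
      (∀ q : ℕ, q + 1 ≤ m → ∀ c : (Fin (q + 2) → G) →₀ ℤ, VRChain X Set.univ (q + 1) k c →
        φ (q + 1) c - c = bnd (q + 1) (lam (q + 1) c) + lam q (bnd q c)) := by
  obtain ⟨l, hkl, hl⟩ : ∃ l ≥ k, ∀ q ≤ m, ∀ c ∈ ripsChains X q k,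
      coneHomotopy φ q c ∈ ripsChains X (q + 1) l := by
    choose! L hL using fun q (hq : q ≤ m) => exists_mem_ripsChains_of_equivariant hX
      (coneHomotopy φ q) fun g _ hc => coneHomotopy_lTranslate hφ hq g hc
    refine ⟨k ⊔ (Finset.range (m + 1)).sup L, le_sup_left,
      fun q hq c hc => ripsChains_mono ?_ (hL q hq c hc)⟩
    exact le_sup_of_le_right (Finset.le_sup (Finset.mem_range.mpr (Nat.lt_succ_of_le hq)))
  refine ⟨l, hkl, coneHomotopy φ, fun q hq c hc => ?_, fun q hq g c hc => ?_, fun c hc => ?_,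
    fun q hq c hc => ?_⟩
  · exact vrChain_univ_iff.mpr (hl q hq c (vrChain_univ_iff.mp hc))
  · exact coneHomotopy_lTranslate hφ hq g (vrChain_univ_iff.mp hc)
  · exact (bnd_coneHomotopy_zero hφ (vrChain_univ_iff.mp hc)).symm
  · rw [bnd_coneHomotopy_succ hφ hq (vrChain_univ_iff.mp hc), sub_add_cancel]
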